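/- arXiv:2509.23064 — 5 statements merged into one kernel-verified Lean document; each statement's English description precedes it below -/
import Mathlib

section
/- Let s > 1 and l ≥ 3. Then the function F_{s,l} is continuously differentiable on ℝ, with F'_{s,l}(t) = s·sign(t)·|t|^{s−1} for |t| ≤ l and F'_{s,l}(t) = sign(t)·(a_{s,l} − b_{s,l}|t|^{−2}) for |t| > l. -/
/-!
`F_{s,l}` is `|t|^s` glued at `|t| = l` to `η + a|t| + b|t|⁻¹`, and the constants `η, a, b` are
exactly those making the two pieces agree at `|t| = l` to first order. Each piece is `C¹` where it
is used (`|t|^s` everywhere because `s > 1`, the tail on `|t| ≥ l > 0`), and two functions with the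
same value and derivative at a point can be glued there without losing differentiability.
-/

open Filter Topology

/-- The auxiliary function `F_{s,l}` of Definition 6.1: `F_{s,l}(t) = |t|^s` for `|t| ≤ l`
and `F_{s,l}(t) = η_{s,l} + a_{s,l}|t| + b_{s,l}|t|⁻¹` for `|t| > l`, where
`η_{s,l} = (1−s²)l^s`, `a_{s,l} = ½s(s+1)l^{s−1}`, `b_{s,l} = ½s(s−1)l^{s+1}`. -/
noncomputable def Fsl (s l t : ℝ) : ℝ :=
  if |t| ≤ l then |t| ^ s
  else (1 - s ^ 2) * l ^ s + (s * (s + 1) / 2) * l ^ (s - 1) * |t|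
    + (s * (s - 1) / 2) * l ^ (s + 1) * |t|⁻¹

noncomputable def fslTail (s l u : ℝ) : ℝ :=
  (1 - s ^ 2) * l ^ s + (s * (s + 1) / 2) * l ^ (s - 1) * u
    + (s * (s - 1) / 2) * l ^ (s + 1) * u⁻¹

noncomputable def fslTailDeriv (s l u : ℝ) : ℝ :=
  (s * (s + 1) / 2) * l ^ (s - 1) - (s * (s - 1) / 2) * l ^ (s + 1) * (u ^ (2 : ℕ))⁻¹

noncomputable def fslDeriv (s l t : ℝ) : ℝ :=
  if |t| ≤ l then s * Real.sign t * |t| ^ (s - 1) else Real.sign t * fslTailDeriv s l |t|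

theorem Fsl_eq_ite (s l : ℝ) :
    Fsl s l = fun t => if |t| ≤ l then |t| ^ s else fslTail s l |t| := rfl

theorem fslTail_self (s : ℝ) {l : ℝ} (hl : 0 < l) : fslTail s l l = l ^ s := by
  have h₁ : l ^ (s - 1) * l = l ^ s := by rw [Real.rpow_sub_one hl.ne' s]; field_simp
  have h₂ : l ^ (s + 1) * l⁻¹ = l ^ s := by rw [Real.rpow_add_one hl.ne' s]; field_simp
  rw [fslTail, mul_assoc, h₁, mul_assoc, h₂]
  ring

theorem fslTailDeriv_self (s : ℝ) {l : ℝ} (hl : 0 < l) :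
    fslTailDeriv s l l = s * l ^ (s - 1) := by
  have h : l ^ (s + 1) = l ^ (s - 1) * l ^ (2 : ℕ) := by
    rw [← Real.rpow_natCast l 2, ← Real.rpow_add hl]
    ring_nf
  rw [fslTailDeriv, h]
  field_simp
  ring

theorem hasDerivAt_fslTail (s l : ℝ) {u : ℝ} (hu : u ≠ 0) :
    HasDerivAt (fslTail s l) (fslTailDeriv s l u) u := by
  have h := (((hasDerivAt_id' u).const_mul ((s * (s + 1) / 2) * l ^ (s - 1))).const_add
    ((1 - s ^ 2) * l ^ s)).add ((hasDerivAt_inv hu).const_mul ((s * (s - 1) / 2) * l ^ (s + 1)))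
  exact h.congr_deriv (by unfold fslTailDeriv; ring)

theorem Real.hasDerivAt_abs_of_ne_zero {t : ℝ} (ht : t ≠ 0) :
    HasDerivAt (|·|) (Real.sign t) t := by
  rcases ht.lt_or_gt with h | h
  · simpa [Real.sign_of_neg h] using hasDerivAt_abs_neg h
  · simpa [Real.sign_of_pos h] using hasDerivAt_abs_pos h

theorem Real.continuousAt_sign_of_ne_zero {t : ℝ} (ht : t ≠ 0) :
    ContinuousAt Real.sign t := by
  rcases ht.lt_or_gt with h | h
  · exact continuousAt_const.congr
      ((eventually_lt_nhds h).mono fun y hy => (Real.sign_of_neg hy).symm)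
  · exact continuousAt_const.congr
      ((eventually_gt_nhds h).mono fun y hy => (Real.sign_of_pos hy).symm)

theorem abs_rpow_sub_two_mul_self (p t : ℝ) :
    |t| ^ (p - 2) * t = Real.sign t * |t| ^ (p - 1) := by
  rcases eq_or_ne t 0 with rfl | ht
  · simp
  have h : |t| ^ (p - 1) = |t| ^ (p - 2) * |t| := by
    rw [← Real.rpow_add_one (abs_ne_zero.2 ht)]
    ring_nf
  rcases ht.lt_or_gt with h' | h'
  · rw [h, Real.sign_of_neg h', abs_of_neg h']; ring
  · rw [h, Real.sign_of_pos h', abs_of_pos h']; ring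

theorem hasDerivAt_abs_rpow_sign (t : ℝ) {p : ℝ} (hp : 1 < p) :
    HasDerivAt (fun t : ℝ => |t| ^ p) (p * Real.sign t * |t| ^ (p - 1)) t := by
  simpa only [mul_assoc, abs_rpow_sub_two_mul_self] using hasDerivAt_abs_rpow t hp

theorem continuous_abs_rpow_deriv {p : ℝ} (hp : 1 < p) :
    Continuous fun t : ℝ => p * Real.sign t * |t| ^ (p - 1) := by
  have h := (contDiff_norm_rpow (E := ℝ) hp).continuous_deriv le_rfl
  simp only [Real.norm_eq_abs] at h
  rwa [funext fun t => (hasDerivAt_abs_rpow_sign t hp).deriv] at h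

theorem HasDerivAt.ite {𝕜 F : Type*} [NontriviallyNormedField 𝕜] [NormedAddCommGroup F]
    [NormedSpace 𝕜 F] {f g : 𝕜 → F} {f' : F} {x : 𝕜} {p : 𝕜 → Prop} [DecidablePred p]
    (hf : HasDerivAt f f' x) (hg : HasDerivAt g f' x) (hfg : f x = g x) :
    HasDerivAt (fun y => if p y then f y else g y) f' x := by
  have hx : (if p x then f x else g x) = f x := by split_ifs <;> simp [hfg]
  have h₁ : HasDerivWithinAt (fun y => if p y then f y else g y) f' {y | p y} x :=
    hf.hasDerivWithinAt.congr (fun y hy => if_pos hy) hx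
  have h₂ : HasDerivWithinAt (fun y => if p y then f y else g y) f' {y | ¬p y} x :=
    hg.hasDerivWithinAt.congr (fun y hy => if_neg hy) (hx.trans hfg)
  rw [← hasDerivWithinAt_univ, ← Set.union_compl_self {y | p y}]
  exact h₁.union h₂

theorem hasDerivAt_fslTail_abs (s l : ℝ) {t : ℝ} (ht : t ≠ 0) :
    HasDerivAt (fun t => fslTail s l |t|) (Real.sign t * fslTailDeriv s l |t|) t := by
  exact ((hasDerivAt_fslTail s l (abs_ne_zero.2 ht)).comp t
    (Real.hasDerivAt_abs_of_ne_zero ht)).congr_deriv (mul_comm _ _)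

theorem hasDerivAt_Fsl {s l : ℝ} (hs : 1 < s) (hl : 0 < l) (t : ℝ) :
    HasDerivAt (Fsl s l) (fslDeriv s l t) t := by
  rcases lt_trichotomy |t| l with h | h | h
  · have hF : Fsl s l =ᶠ[𝓝 t] fun t => |t| ^ s :=
      ((isOpen_lt continuous_abs continuous_const).eventually_mem h).mono
        fun y hy => if_pos (le_of_lt hy)
    rw [fslDeriv, if_pos h.le]
    exact (hasDerivAt_abs_rpow_sign t hs).congr_of_eventuallyEq hF
  · have ht : t ≠ 0 := abs_pos.1 (h ▸ hl)
    have hD : Real.sign t * fslTailDeriv s l |t| = s * Real.sign t * |t| ^ (s - 1) := by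
      rw [h, fslTailDeriv_self s hl]; ring
    rw [fslDeriv, if_pos h.le, Fsl_eq_ite]
    exact (hasDerivAt_abs_rpow_sign t hs).ite (hD ▸ hasDerivAt_fslTail_abs s l ht)
      (by rw [h, fslTail_self s hl])
  · have ht : t ≠ 0 := abs_pos.1 (hl.trans h)
    have hF : Fsl s l =ᶠ[𝓝 t] fun t => fslTail s l |t| :=
      ((isOpen_lt continuous_const continuous_abs).eventually_mem h).mono
        fun y hy => if_neg (not_le.2 hy)
    rw [fslDeriv, if_neg (not_le.2 h)]
    exact (hasDerivAt_fslTail_abs s l ht).congr_of_eventuallyEq hF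

theorem continuous_fslDeriv {s l : ℝ} (hs : 1 < s) (hl : 0 < l) : Continuous (fslDeriv s l) := by
  refine continuous_if_le continuous_abs continuous_const
    (continuous_abs_rpow_deriv hs).continuousOn (fun t ht => ?_) (fun t ht => ?_)
  · have ht0 : t ≠ 0 := abs_pos.1 (hl.trans_le ht)
    refine ((Real.continuousAt_sign_of_ne_zero ht0).mul ?_).continuousWithinAt
    exact continuousAt_const.sub (continuousAt_const.mul
      ((continuous_abs.continuousAt.pow 2).inv₀ (pow_ne_zero 2 (abs_ne_zero.2 ht0))))
  · rw [ht, fslTailDeriv_self s hl]; ring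

/-- For `s > 1` and `l ≥ 3`, `F_{s,l}` is continuously differentiable, with
`F'_{s,l}(t) = s · sign t · |t|^{s−1}` for `|t| ≤ l`, and
`F'_{s,l}(t) = sign t · (a_{s,l} − b_{s,l} |t|^{−2})` for `|t| > l`. -/
theorem stmt_5 (s l : ℝ) (hs : 1 < s) (hl : 3 ≤ l) :
    ContDiff ℝ 1 (Fsl s l) ∧
    (∀ t : ℝ, |t| ≤ l →
      deriv (Fsl s l) t = s * Real.sign t * |t| ^ (s - 1)) ∧
    (∀ t : ℝ, l < |t| →
      deriv (Fsl s l) t =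
        Real.sign t * ((s * (s + 1) / 2) * l ^ (s - 1)
          - (s * (s - 1) / 2) * l ^ (s + 1) * (|t| ^ (2 : ℕ))⁻¹)) := by
  have hl₀ : 0 < l := by linarith
  have hderiv : deriv (Fsl s l) = fslDeriv s l := funext fun t => (hasDerivAt_Fsl hs hl₀ t).deriv
  refine ⟨contDiff_one_iff_deriv.2 ⟨fun t => (hasDerivAt_Fsl hs hl₀ t).differentiableAt,
    hderiv ▸ continuous_fslDeriv hs hl₀⟩, fun t ht => ?_, fun t ht => ?_⟩
  · rw [hderiv, fslDeriv, if_pos ht]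
  · rw [hderiv, fslDeriv, if_neg (not_le.2 ht)]
    rfl
end

section
/- Let s > 1 and l ≥ 3, and let G_{s,l} = F_{s,l}·F'_{s,l}. Then G_{s,l} is continuously differentiable on ℝ, and G'_{s,l} is bounded and uniformly continuous on ℝ; moreover F'_{s,l} is bounded and uniformly continuous on ℝ. -/
/-!
Write `F_{s,l}(t) = φ(|t|)` with `φ(x) = x^s` for `x ≤ l` and `φ(x) = η + a x + b / x` beyond `l`;
the coefficients `η, a, b` are exactly those for which the two branches of `φ` agree at `l` up to
the second derivative. Hence `φ'` and `ψ = (φ φ')' = φ'² + φ φ''` are continuous on `[0, ∞)`, and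
as `φ'(0) = 0`, so are `t ↦ sign t · φ'(|t|)` and `t ↦ ψ(|t|)` on `ℝ`. Off the finite set `{0, ±l}`
these are the derivatives of `F` and of `G = F F'` by the chain rule, and a continuous function
whose derivative off a finite set extends continuously is differentiable everywhere. At infinity
`φ' → a` and `ψ → a²`, and a continuous function on `ℝ` with limits at `±∞` is bounded and
uniformly continuous.
-/

open Filter Topology Set

-- A local version of Mathlib's `hasDerivAt_of_hasDerivAt_of_ne`.
theorem hasDerivAt_of_eventually_hasDerivAt_of_ne {f g : ℝ → ℝ} {x : ℝ}
    (hd : ∀ᶠ y in 𝓝[≠] x, HasDerivAt f (g y) y) (hf : ContinuousAt f x)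
    (hg : ContinuousAt g x) : HasDerivAt f (g x) x := by
  set s := {y | HasDerivAt f (g y) y}
  have hdiff : DifferentiableOn ℝ f s := fun y hy => hy.differentiableAt.differentiableWithinAt
  have hderiv : ∀ l ≤ 𝓝[≠] x, s ∈ l → Tendsto (deriv f) l (𝓝 (g x)) := fun l hl hs =>
    (hg.tendsto.mono_left (hl.trans nhdsWithin_le_nhds)).congr' <|
      mem_of_superset hs fun y hy => hy.deriv.symm
  have hlt : s ∈ 𝓝[<] x := nhdsWithin_mono x (fun y hy => ne_of_lt hy) hd
  have hgt : s ∈ 𝓝[>] x := nhdsWithin_mono x (fun y hy => ne_of_gt hy) hd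
  have := (hasDerivWithinAt_Iic_of_tendsto_deriv hdiff hf.continuousWithinAt hlt
    (hderiv _ (nhdsWithin_mono x fun y hy => ne_of_lt hy) hlt)).union
    (hasDerivWithinAt_Ici_of_tendsto_deriv hdiff hf.continuousWithinAt hgt
    (hderiv _ (nhdsWithin_mono x fun y hy => ne_of_gt hy) hgt))
  simpa using this

theorem hasDerivAt_of_hasDerivAt_of_notMem_finite {f g : ℝ → ℝ} {S : Set ℝ} (hS : S.Finite)
    (hd : ∀ y ∉ S, HasDerivAt f (g y) y) (hf : Continuous f) (hg : Continuous g) (x : ℝ) :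
    HasDerivAt f (g x) x := by
  refine hasDerivAt_of_eventually_hasDerivAt_of_ne ?_ hf.continuousAt hg.continuousAt
  have : (S \ {x})ᶜ ∈ 𝓝[≠] x :=
    mem_nhdsWithin_of_mem_nhds <| (hS.sdiff.isClosed.isOpen_compl).mem_nhds fun h => h.2 rfl
  filter_upwards [this, self_mem_nhdsWithin] with y hyS hyx
  exact hd y fun h => hyS ⟨h, hyx⟩

theorem eventuallyEq_ite_le_left {f g : ℝ → ℝ} {l x : ℝ} (hx : x < l) :
    (fun y => if y ≤ l then f y else g y) =ᶠ[𝓝 x] f := by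
  filter_upwards [Iio_mem_nhds hx] with y hy
  rw [if_pos (le_of_lt hy)]

theorem eventuallyEq_ite_le_right {f g : ℝ → ℝ} {l x : ℝ} (hx : l < x) :
    (fun y => if y ≤ l then f y else g y) =ᶠ[𝓝 x] g := by
  filter_upwards [Ioi_mem_nhds hx] with y hy
  rw [if_neg (not_le.2 hy)]

theorem eventually_sign_eq {t : ℝ} (ht : t ≠ 0) :
    ∀ᶠ u in 𝓝 t, (SignType.sign u : ℝ) = SignType.sign t :=
  mem_of_superset
    (continuousAt_sign_of_ne_zero ht (isOpen_discrete {SignType.sign t} |>.mem_nhds rfl))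
    fun _ hu => congrArg _ hu

theorem abs_sign_le_one (t : ℝ) : |(SignType.sign t : ℝ)| ≤ 1 := by
  rcases lt_trichotomy t 0 with h | h | h <;> simp [h]

theorem sign_mul_sign_of_ne_zero {t : ℝ} (ht : t ≠ 0) :
    (SignType.sign t : ℝ) * SignType.sign t = 1 := by
  rcases ht.lt_or_gt with h | h <;> simp [h]

theorem HasDerivAt.comp_abs {g g' : ℝ → ℝ} {t : ℝ} (ht : t ≠ 0)
    (hg : HasDerivAt g (g' |t|) |t|) :
    HasDerivAt (fun u => g |u|) (SignType.sign t * g' |t|) t :=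
  (hg.comp t (hasDerivAt_abs ht)).congr_deriv (mul_comm _ _)

theorem HasDerivAt.sign_mul_comp_abs {g g' : ℝ → ℝ} {t : ℝ} (ht : t ≠ 0)
    (hg : HasDerivAt g (g' |t|) |t|) :
    HasDerivAt (fun u => SignType.sign u * g |u|) (g' |t|) t := by
  have h := ((hg.comp_abs ht).const_mul (SignType.sign t : ℝ)).congr_of_eventuallyEq <|
    (eventually_sign_eq ht).mono fun u hu => congrArg (· * g |u|) hu
  rwa [← mul_assoc, sign_mul_sign_of_ne_zero ht, one_mul] at h

theorem Continuous.sign_mul_comp_abs {g : ℝ → ℝ} (hg : Continuous g) (hg0 : g 0 = 0) :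
    Continuous fun t => SignType.sign t * g |t| := by
  refine continuous_iff_continuousAt.2 fun t => ?_
  rcases eq_or_ne t 0 with rfl | ht
  · have hlim : Tendsto (fun t => g |t|) (𝓝 0) (𝓝 0) := by
      simpa [Function.comp_def, hg0] using (hg.tendsto _).comp (continuous_abs.tendsto (0 : ℝ))
    have hle (u : ℝ) : ‖(SignType.sign u : ℝ) * g |u|‖ ≤ ‖g |u|‖ := by
      rw [norm_mul]
      exact mul_le_of_le_one_left (norm_nonneg _) (abs_sign_le_one u)
    simpa [ContinuousAt] using squeeze_zero_norm hle (by simpa using hlim.norm)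
  · refine ContinuousAt.mul ?_ (hg.comp continuous_abs).continuousAt
    exact (continuous_of_discreteTopology (f := ((↑) : SignType → ℝ))).continuousAt.comp
      (continuousAt_sign_of_ne_zero ht)

theorem Continuous.exists_abs_le_of_tendsto_cocompact {α : Type*} [TopologicalSpace α]
    {f : α → ℝ} (hf : Continuous f) {c : ℝ} (h : Tendsto f (cocompact α) (𝓝 c)) :
    ∃ M, ∀ t, |f t| ≤ M := by
  let f₀ : ZeroAtInftyContinuousMap α ℝ :=
    ⟨⟨fun t => f t - c, hf.sub continuous_const⟩, by simpa using h.sub_const c⟩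
  obtain ⟨M, hM⟩ := f₀.isBounded_range.exists_norm_le
  refine ⟨M + |c|, fun t => ?_⟩
  have h₁ : |f t - c| ≤ M := hM _ ⟨t, rfl⟩
  have h₂ := abs_sub_abs_le_abs_sub (f t) c
  linarith

theorem Continuous.uniformContinuous_of_tendsto_atBot_atTop {f : ℝ → ℝ} (hf : Continuous f)
    {a b : ℝ} (ha : Tendsto f atBot (𝓝 a)) (hb : Tendsto f atTop (𝓝 b)) :
    UniformContinuous f := by
  -- `f` minus a Lipschitz ramp from `a` to `b` tends to `0` along the cocompact filter.
  set r : ℝ → ℝ := fun t => a + (b - a) * max 0 (min 1 t)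
  have hr : UniformContinuous r := uniformContinuous_const.add
    (((LipschitzWith.id.const_min 1).const_max 0).uniformContinuous.const_mul' (b - a))
  have hr0 : Tendsto (fun t => f t - r t) (cocompact ℝ) (𝓝 0) := by
    rw [cocompact_eq_atBot_atTop, tendsto_sup]
    constructor
    · have hra : ∀ᶠ t in atBot, r t = a := by
        filter_upwards [eventually_le_atBot 0] with t ht
        simp [r, min_eq_right (ht.trans zero_le_one), max_eq_left ht]
      simpa using (ha.sub_const a).congr' (hra.mono fun t ht => by rw [ht])
    · have hrb : ∀ᶠ t in atTop, r t = b := by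
        filter_upwards [eventually_ge_atTop 1] with t ht
        simp [r, min_eq_left ht]
      simpa using (hb.sub_const b).congr' (hrb.mono fun t ht => by rw [ht])
  simpa [r] using ((hf.sub hr.continuous).uniformContinuous_of_tendsto_cocompact hr0).add hr

theorem Filter.Tendsto.sign_mul_comp_abs_atTop {g : ℝ → ℝ} {c : ℝ} (h : Tendsto g atTop (𝓝 c)) :
    Tendsto (fun t => SignType.sign t * g |t|) atTop (𝓝 c) :=
  (h.comp tendsto_abs_atTop_atTop).congr' <|
    (eventually_gt_atTop 0).mono fun t ht => by simp [ht, abs_of_pos ht]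

theorem Filter.Tendsto.sign_mul_comp_abs_atBot {g : ℝ → ℝ} {c : ℝ} (h : Tendsto g atTop (𝓝 c)) :
    Tendsto (fun t => SignType.sign t * g |t|) atBot (𝓝 (-c)) :=
  (h.comp tendsto_abs_atBot_atTop).neg.congr' <|
    (eventually_lt_atBot 0).mono fun t ht => by simp [ht]

theorem tendsto_abs_cocompact_atTop : Tendsto (|·|) (cocompact ℝ) atTop :=
  tendsto_norm_cocompact_atTop

theorem ne_zero_and_abs_ne_of_notMem {l y : ℝ} (hy : y ∉ ({0, l, -l} : Set ℝ)) :
    y ≠ 0 ∧ |y| ≠ l := by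
  simp only [mem_insert_iff, mem_singleton_iff, not_or] at hy
  exact ⟨hy.1, fun h => (eq_or_eq_neg_of_abs_eq h).elim hy.2.1 hy.2.2⟩

namespace Fsl

noncomputable def eta (s l : ℝ) : ℝ := (1 - s ^ 2) * l ^ s

noncomputable def a (s l : ℝ) : ℝ := s * (s + 1) / 2 * l ^ (s - 1)

noncomputable def b (s l : ℝ) : ℝ := s * (s - 1) / 2 * l ^ (s + 1)

noncomputable def profile (s l x : ℝ) : ℝ :=
  if x ≤ l then x ^ s else eta s l + a s l * x + b s l * x⁻¹

noncomputable def profileDeriv (s l x : ℝ) : ℝ :=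
  if x ≤ l then s * x ^ (s - 1) else a s l - b s l * x⁻¹ ^ 2

noncomputable def profileProdDeriv (s l x : ℝ) : ℝ :=
  if x ≤ l then s * (2 * s - 1) * x ^ (2 * s - 2)
  else (a s l - b s l * x⁻¹ ^ 2) ^ 2 + (eta s l + a s l * x + b s l * x⁻¹) * (2 * b s l * x⁻¹ ^ 3)

theorem eq_profile_comp_abs (s l : ℝ) : Fsl s l = fun t => profile s l |t| := rfl

variable {s l x : ℝ}

theorem inner_eq_outer_profile (hl : 0 < l) : l ^ s = eta s l + a s l * l + b s l * l⁻¹ := by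
  rw [eta, a, b, Real.rpow_sub_one hl.ne', Real.rpow_add_one hl.ne']
  field_simp
  ring

theorem inner_eq_outer_profileDeriv (hl : 0 < l) :
    s * l ^ (s - 1) = a s l - b s l * l⁻¹ ^ 2 := by
  rw [a, b, Real.rpow_sub_one hl.ne', Real.rpow_add_one hl.ne']
  field_simp
  ring

theorem inner_eq_outer_profileProdDeriv (hl : 0 < l) :
    s * (2 * s - 1) * l ^ (2 * s - 2) = (a s l - b s l * l⁻¹ ^ 2) ^ 2
      + (eta s l + a s l * l + b s l * l⁻¹) * (2 * b s l * l⁻¹ ^ 3) := by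
  rw [← inner_eq_outer_profile hl, ← inner_eq_outer_profileDeriv hl, b,
    show 2 * s - 2 = (s - 1) + (s - 1) by ring, Real.rpow_add hl, Real.rpow_sub_one hl.ne',
    Real.rpow_add_one hl.ne']
  field_simp
  ring

theorem continuous_profile (hs : 0 ≤ s) (hl : 0 < l) : Continuous (profile s l) :=
  continuous_if_le continuous_id continuous_const (Real.continuous_rpow_const hs).continuousOn
    (by have := fun x (hx : x ∈ {x | l ≤ x}) => (hl.trans_le hx).ne'
        fun_prop (disch := assumption)) fun x hx => by
      subst hx; exact inner_eq_outer_profile hl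

theorem continuous_profileDeriv (hs : 1 ≤ s) (hl : 0 < l) : Continuous (profileDeriv s l) :=
  continuous_if_le continuous_id continuous_const
    (continuous_const.mul (Real.continuous_rpow_const (by linarith))).continuousOn
    (by have := fun x (hx : x ∈ {x | l ≤ x}) => (hl.trans_le hx).ne'
        fun_prop (disch := assumption)) fun x hx => by
      subst hx; exact inner_eq_outer_profileDeriv hl

theorem continuous_profileProdDeriv (hs : 1 ≤ s) (hl : 0 < l) :
    Continuous (profileProdDeriv s l) :=
  continuous_if_le continuous_id continuous_const
    (continuous_const.mul (Real.continuous_rpow_const (by linarith))).continuousOn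
    (by have := fun x (hx : x ∈ {x | l ≤ x}) => (hl.trans_le hx).ne'
        fun_prop (disch := assumption)) fun x hx => by
      subst hx; exact inner_eq_outer_profileProdDeriv hl

theorem profileDeriv_zero (hs : s ≠ 1) (hl : 0 ≤ l) : profileDeriv s l 0 = 0 := by
  rw [profileDeriv, if_pos hl, Real.zero_rpow (sub_ne_zero.2 hs), mul_zero]

theorem hasDerivAt_profile (hx : 0 < x) (hxl : x ≠ l) :
    HasDerivAt (profile s l) (profileDeriv s l x) x := by
  rcases hxl.lt_or_gt with h | h
  · rw [profileDeriv, if_pos h.le]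
    exact (Real.hasDerivAt_rpow_const (Or.inl hx.ne')).congr_of_eventuallyEq
      (eventuallyEq_ite_le_left h)
  · rw [profileDeriv, if_neg h.not_ge]
    have hout := (((hasDerivAt_id x).const_mul (a s l)).const_add (eta s l)).add
      ((hasDerivAt_inv hx.ne').const_mul (b s l))
    refine (hout.congr_deriv ?_).congr_of_eventuallyEq (eventuallyEq_ite_le_right h)
    simp only [mul_one]
    ring

theorem hasDerivAt_profile_mul_profileDeriv (hx : 0 < x) (hxl : x ≠ l) :
    HasDerivAt (fun y => profile s l y * profileDeriv s l y) (profileProdDeriv s l x) x := by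
  rcases hxl.lt_or_gt with h | h
  · rw [profileProdDeriv, if_pos h.le]
    have hin := (Real.hasDerivAt_rpow_const (p := s) (Or.inl hx.ne')).mul
      ((Real.hasDerivAt_rpow_const (p := s - 1) (Or.inl hx.ne')).const_mul s)
    refine (hin.congr_deriv ?_).congr_of_eventuallyEq
      ((eventuallyEq_ite_le_left h).mul (eventuallyEq_ite_le_left h))
    have e₁ : x ^ (s - 1) * x ^ (s - 1) = x ^ (2 * s - 2) := by
      rw [← Real.rpow_add hx]; ring_nf
    have e₂ : x ^ s * x ^ (s - 1 - 1) = x ^ (2 * s - 2) := by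
      rw [← Real.rpow_add hx]; ring_nf
    linear_combination s ^ 2 * e₁ + s * (s - 1) * e₂
  · rw [profileProdDeriv, if_neg h.not_ge]
    have hout := ((((hasDerivAt_id x).const_mul (a s l)).const_add (eta s l)).add
      ((hasDerivAt_inv hx.ne').const_mul (b s l))).mul
      ((((hasDerivAt_inv hx.ne').pow 2).const_mul (b s l)).const_sub (a s l))
    refine (hout.congr_deriv ?_).congr_of_eventuallyEq
      ((eventuallyEq_ite_le_right h).mul (eventuallyEq_ite_le_right h))
    simp only [Pi.add_apply, Pi.pow_apply, id, mul_one, Nat.reduceSub, pow_one]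
    have := hx.ne'
    field_simp
    ring

theorem tendsto_profileDeriv_atTop :
    Tendsto (profileDeriv s l) atTop (𝓝 (a s l)) := by
  have hout : Tendsto (fun x : ℝ => a s l - b s l * x⁻¹ ^ 2) atTop (𝓝 (a s l)) := by
    simpa using ((tendsto_inv_atTop_zero.pow 2).const_mul (b s l)).const_sub (a s l)
  exact hout.congr' <| (eventually_gt_atTop l).mono fun x hx => by
    rw [profileDeriv, if_neg hx.not_ge]

theorem tendsto_profileProdDeriv_atTop (hl : 0 < l) :
    Tendsto (profileProdDeriv s l) atTop (𝓝 (a s l ^ 2)) := by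
  set P : ℝ → ℝ := fun y =>
    (a s l - b s l * y ^ 2) ^ 2 + 2 * b s l * (eta s l * y ^ 3 + a s l * y ^ 2 + b s l * y ^ 4)
  have hP : Tendsto (fun x : ℝ => P x⁻¹) atTop (𝓝 (a s l ^ 2)) := by
    simpa [P, Function.comp_def] using
      ((by fun_prop : Continuous P).tendsto 0).comp tendsto_inv_atTop_zero
  refine hP.congr' <| (eventually_gt_atTop l).mono fun x hx => ?_
  rw [profileProdDeriv, if_neg hx.not_ge]
  have : x ≠ 0 := (hl.trans hx).ne'
  simp only [P]
  field_simp

theorem hasDerivAt (hs : 1 < s) (hl : 0 < l) (t : ℝ) :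
    HasDerivAt (Fsl s l) (SignType.sign t * profileDeriv s l |t|) t := by
  rw [eq_profile_comp_abs]
  refine hasDerivAt_of_hasDerivAt_of_notMem_finite (S := {0, l, -l}) (toFinite _) (fun y hy => ?_)
    ((continuous_profile (by linarith) hl).comp continuous_abs)
    ((continuous_profileDeriv hs.le hl).sign_mul_comp_abs (profileDeriv_zero hs.ne' hl.le)) t
  obtain ⟨hy₀, hyl⟩ := ne_zero_and_abs_ne_of_notMem hy
  exact (hasDerivAt_profile (abs_pos.2 hy₀) hyl).comp_abs hy₀

theorem deriv_eq (hs : 1 < s) (hl : 0 < l) :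
    deriv (Fsl s l) = fun t => SignType.sign t * profileDeriv s l |t| :=
  funext fun t => (hasDerivAt hs hl t).deriv

theorem hasDerivAt_mul_deriv (hs : 1 < s) (hl : 0 < l) (t : ℝ) :
    HasDerivAt (fun u => Fsl s l u * deriv (Fsl s l) u) (profileProdDeriv s l |t|) t := by
  rw [deriv_eq hs hl]
  refine hasDerivAt_of_hasDerivAt_of_notMem_finite (S := {0, l, -l}) (toFinite _) (fun y hy => ?_)
    (((continuous_profile (by linarith) hl).comp continuous_abs).mul
      ((continuous_profileDeriv hs.le hl).sign_mul_comp_abs (profileDeriv_zero hs.ne' hl.le)))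
    ((continuous_profileProdDeriv hs.le hl).comp continuous_abs) t
  obtain ⟨hy₀, hyl⟩ := ne_zero_and_abs_ne_of_notMem hy
  refine ((hasDerivAt_profile_mul_profileDeriv (abs_pos.2 hy₀) hyl).sign_mul_comp_abs
    hy₀).congr_of_eventuallyEq (Eventually.of_forall fun u => ?_)
  simp only [Pi.mul_apply, Function.comp_apply]
  ring

end Fsl

/-- For `s > 1`, `l ≥ 3`, the function `G_{s,l} = F_{s,l} · F'_{s,l}` is continuously
differentiable, `G'_{s,l}` is bounded and uniformly continuous on `ℝ`, and `F'_{s,l}` is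
bounded and uniformly continuous on `ℝ`. -/
theorem stmt_6 (s l : ℝ) (hs : 1 < s) (hl : 3 ≤ l) :
    ContDiff ℝ 1 (fun t => Fsl s l t * deriv (Fsl s l) t) ∧
    (∃ M : ℝ, ∀ t : ℝ, |deriv (fun u => Fsl s l u * deriv (Fsl s l) u) t| ≤ M) ∧
    UniformContinuous (deriv (fun u => Fsl s l u * deriv (Fsl s l) u)) ∧
    (∃ M : ℝ, ∀ t : ℝ, |deriv (Fsl s l) t| ≤ M) ∧
    UniformContinuous (deriv (Fsl s l)) := by
  have hl₀ : 0 < l := by linarith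
  have hG := Fsl.hasDerivAt_mul_deriv hs hl₀
  have hG' : deriv (fun u => Fsl s l u * deriv (Fsl s l) u) =
      fun t => Fsl.profileProdDeriv s l |t| := funext fun t => (hG t).deriv
  have hψ := (Fsl.continuous_profileProdDeriv hs.le hl₀).comp continuous_abs
  have hψ_lim := (Fsl.tendsto_profileProdDeriv_atTop (s := s) hl₀).comp tendsto_abs_cocompact_atTop
  have hφ' := Fsl.continuous_profileDeriv hs.le hl₀
  have hφ'_lim := Fsl.tendsto_profileDeriv_atTop (s := s) (l := l)
  rw [hG']
  refine ⟨contDiff_one_iff_deriv.2 ⟨fun t => (hG t).differentiableAt, hG' ▸ hψ⟩,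
    hψ.exists_abs_le_of_tendsto_cocompact hψ_lim,
    hψ.uniformContinuous_of_tendsto_cocompact hψ_lim, ?_, ?_⟩ <;> rw [Fsl.deriv_eq hs hl₀]
  · obtain ⟨M, hM⟩ := (hφ'.comp continuous_abs).exists_abs_le_of_tendsto_cocompact
      (hφ'_lim.comp tendsto_abs_cocompact_atTop)
    refine ⟨M, fun t => ?_⟩
    rw [abs_mul]
    exact (mul_le_of_le_one_left (abs_nonneg _) (abs_sign_le_one t)).trans (hM t)
  · exact (hφ'.sign_mul_comp_abs (Fsl.profileDeriv_zero hs.ne' hl₀.le))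
      |>.uniformContinuous_of_tendsto_atBot_atTop hφ'_lim.sign_mul_comp_abs_atBot
        hφ'_lim.sign_mul_comp_abs_atTop
end

section
/- Let s > 1 and l ≥ 3. Then for every t ∈ ℝ, |t·F'_{s,l}(t)| ≤ 4s·F_{s,l}(t). -/
open Set

lemma Fsl_neg (s l t : ℝ) : Fsl s l (-t) = Fsl s l t := by
  simp only [Fsl, abs_neg]

lemma deriv_Fsl_neg (s l t : ℝ) : deriv (Fsl s l) (-t) = -deriv (Fsl s l) t := by
  have h : (fun x => Fsl s l (-x)) = Fsl s l := funext (Fsl_neg s l)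
  conv_lhs => rw [← h]
  rw [deriv_comp_neg, neg_neg]

noncomputable def fslOuter (s l x : ℝ) : ℝ :=
  (1 - s ^ 2) * l ^ s + (s * (s + 1) / 2) * l ^ (s - 1) * x
    + (s * (s - 1) / 2) * l ^ (s + 1) * x⁻¹

section

variable {s l t : ℝ}

lemma Fsl_of_nonneg_of_le (ht : 0 ≤ t) (htl : t ≤ l) : Fsl s l t = t ^ s := by
  rw [Fsl, abs_of_nonneg ht, if_pos htl]

lemma Fsl_of_lt (hl : 0 ≤ l) (htl : l < t) : Fsl s l t = fslOuter s l t := by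
  rw [Fsl, abs_of_pos (hl.trans_lt htl), if_neg htl.not_ge, fslOuter]

lemma fslOuter_self (hl : 0 < l) : fslOuter s l l = l ^ s := by
  rw [fslOuter, Real.rpow_sub_one hl.ne', Real.rpow_add_one hl.ne']
  field_simp
  ring

lemma hasDerivAt_fslOuter (hx : t ≠ 0) :
    HasDerivAt (fslOuter s l)
      (s * (s + 1) / 2 * l ^ (s - 1) - s * (s - 1) / 2 * l ^ (s + 1) / t ^ 2) t := by
  have h := (((hasDerivAt_id' t).const_mul (s * (s + 1) / 2 * l ^ (s - 1))).const_add
    ((1 - s ^ 2) * l ^ s)).add ((hasDerivAt_inv hx).const_mul (s * (s - 1) / 2 * l ^ (s + 1)))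
  exact h.congr_deriv (by ring)

lemma hasDerivAt_fslOuter_self (hl : 0 < l) :
    HasDerivAt (fslOuter s l) (s * l ^ (s - 1)) l := by
  convert hasDerivAt_fslOuter (s := s) hl.ne' using 1
  rw [Real.rpow_sub_one hl.ne', Real.rpow_add_one hl.ne']
  field_simp
  ring

lemma hasDerivAt_Fsl_of_pos_of_le (ht : 0 < t) (htl : t ≤ l) :
    HasDerivAt (Fsl s l) (s * t ^ (s - 1)) t := by
  have hrpow := Real.hasDerivAt_rpow_const (p := s) (x := t) (Or.inl ht.ne')
  rcases htl.lt_or_eq with htl | rfl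
  · refine hrpow.congr_of_eventuallyEq ?_
    filter_upwards [Ioo_mem_nhds ht htl] with x hx
    exact Fsl_of_nonneg_of_le hx.1.le hx.2.le
  · have hleft : HasDerivWithinAt (Fsl s t) (s * t ^ (s - 1)) (Iic t) t := by
      refine hrpow.hasDerivWithinAt.congr_of_eventuallyEq ?_ (Fsl_of_nonneg_of_le ht.le le_rfl)
      filter_upwards [self_mem_nhdsWithin, mem_nhdsWithin_of_mem_nhds (Ioi_mem_nhds ht)]
        with x hxt hx0
      exact Fsl_of_nonneg_of_le hx0.le hxt
    have hval : Fsl s t t = fslOuter s t t := by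
      rw [Fsl_of_nonneg_of_le ht.le le_rfl, fslOuter_self ht]
    have hright : HasDerivWithinAt (Fsl s t) (s * t ^ (s - 1)) (Ici t) t := by
      refine (hasDerivAt_fslOuter_self ht).hasDerivWithinAt.congr (fun x hx => ?_) hval
      rcases (mem_Ici.mp hx).lt_or_eq with hlt | rfl
      · exact Fsl_of_lt ht.le hlt
      · exact hval
    exact (hleft.union hright).hasDerivAt (by rw [Iic_union_Ici]; exact Filter.univ_mem)

lemma hasDerivAt_Fsl_of_lt (hl : 0 < l) (htl : l < t) :
    HasDerivAt (Fsl s l)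
      (s * (s + 1) / 2 * l ^ (s - 1) - s * (s - 1) / 2 * l ^ (s + 1) / t ^ 2) t := by
  refine (hasDerivAt_fslOuter (hl.trans htl).ne').congr_of_eventuallyEq ?_
  filter_upwards [Ioi_mem_nhds htl] with x hx
  exact Fsl_of_lt hl.le hx

lemma abs_mul_deriv_fslOuter_le (hs : 1 ≤ s) (hl : 0 < l) (htl : l ≤ t) :
    |t * (s * (s + 1) / 2 * l ^ (s - 1) - s * (s - 1) / 2 * l ^ (s + 1) / t ^ 2)|
      ≤ 4 * s * fslOuter s l t := by
  have ht : 0 < t := hl.trans_le htl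
  have hfactor : 0 < l ^ s / (l * t) := by positivity
  have hlhs : t * (s * (s + 1) / 2 * l ^ (s - 1) - s * (s - 1) / 2 * l ^ (s + 1) / t ^ 2)
      = l ^ s / (l * t) * (s * (s + 1) / 2 * t ^ 2 - s * (s - 1) / 2 * l ^ 2) := by
    rw [Real.rpow_sub_one hl.ne', Real.rpow_add_one hl.ne']
    field_simp
  have hrhs : 4 * s * fslOuter s l t = l ^ s / (l * t) *
      (4 * s * ((1 - s ^ 2) * l * t + s * (s + 1) / 2 * t ^ 2 + s * (s - 1) / 2 * l ^ 2)) := by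
    rw [fslOuter, Real.rpow_sub_one hl.ne', Real.rpow_add_one hl.ne']
    field_simp
  rw [hlhs, hrhs, abs_mul, abs_of_pos hfactor]
  refine mul_le_mul_of_nonneg_left ?_ hfactor.le
  have hlhs_nonneg : 0 ≤ s * (s + 1) / 2 * t ^ 2 - s * (s - 1) / 2 * l ^ 2 := by
    have : l ^ 2 ≤ t ^ 2 := pow_le_pow_left₀ hl.le htl 2
    nlinarith
  rw [abs_of_nonneg hlhs_nonneg, ← sub_nonneg]
  have hu : 0 ≤ t - l := sub_nonneg.mpr htl
  calc (0 : ℝ) ≤ (4 * s - 1) * (s * (s + 1) / 2) * (t - l) ^ 2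
        + 3 * s * (s + 1) * l * (t - l) + 3 * s * l ^ 2 := by
        have h4s : 0 ≤ 4 * s - 1 := by linarith
        positivity
    _ = _ := by ring

lemma abs_mul_deriv_Fsl_le_of_pos (hs : 1 ≤ s) (hl : 0 < l) (ht : 0 < t) :
    |t * deriv (Fsl s l) t| ≤ 4 * s * Fsl s l t := by
  rcases le_or_gt t l with htl | htl
  · have hmul : t * (s * t ^ (s - 1)) = s * t ^ s := by
      rw [Real.rpow_sub_one ht.ne']
      field_simp
    rw [(hasDerivAt_Fsl_of_pos_of_le ht htl).deriv, Fsl_of_nonneg_of_le ht.le htl, hmul,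
      abs_of_nonneg (by positivity)]
    nlinarith [Real.rpow_nonneg ht.le s]
  · rw [(hasDerivAt_Fsl_of_lt hl htl).deriv, Fsl_of_lt hl.le htl]
    exact abs_mul_deriv_fslOuter_le hs hl htl.le

end

/-- For `s > 1` and `l ≥ 3`: `|t · F'_{s,l}(t)| ≤ 4s · F_{s,l}(t)` for every `t ∈ ℝ`. -/
theorem stmt_7 (s l : ℝ) (hs : 1 < s) (hl : 3 ≤ l) :
    ∀ t : ℝ, |t * deriv (Fsl s l) t| ≤ 4 * s * Fsl s l t := by
  have hl0 : 0 < l := by linarith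
  intro t
  rcases lt_trichotomy t 0 with ht | rfl | ht
  · simpa only [deriv_Fsl_neg, Fsl_neg, neg_mul_neg] using
      abs_mul_deriv_Fsl_le_of_pos hs.le hl0 (neg_pos.mpr ht)
  · rw [zero_mul, abs_zero, Fsl_of_nonneg_of_le le_rfl hl0.le, Real.zero_rpow (by positivity),
      mul_zero]
  · exact abs_mul_deriv_Fsl_le_of_pos hs.le hl0 ht
end

section
/- For s > 1 and l ≥ 3, define g on [l,∞) by g(t) = t^s − (1−s²)l^s − ½s(s+1)l^{s−1}t − ½s(s−1)l^{s+1}t^{−1}. Then g(t) ≥ 0 for all t ∈ [l,∞); in particular, t^s ≥ (1−s²)l^s + ½s(s+1)l^{s−1}t + ½s(s−1)l^{s+1}t^{−1} for all t ≥ l. -/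
/-!
Since `g l = 0`, it suffices that `g` is monotone on `[l, ∞)`. Multiplying `g'(t)` by `t²` gives
`(s/2) (2 t^(s+1) - l^(s-1) ((s+1) t² - (s-1) l²))`, and this is nonnegative by Bernoulli's
inequality `v ^ r ≥ 1 + r (v - 1)` for `v = (t/l)²` and `r = (s+1)/2 ≥ 1`.
-/

open Real Set

lemma one_add_mul_sq_sub_one_le_rpow_two_mul {r u : ℝ} (hr : 1 ≤ r) (hu : 0 ≤ u) :
    1 + r * (u ^ 2 - 1) ≤ u ^ (2 * r) := by
  have h := one_add_mul_self_le_rpow_one_add (by nlinarith : (-1 : ℝ) ≤ u ^ 2 - 1) hr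
  rwa [add_sub_cancel, ← rpow_natCast_mul hu, Nat.cast_ofNat] at h

lemma rpow_add_one_eq_rpow_sub_one_mul_sq {x : ℝ} (hx : 0 < x) (s : ℝ) : x ^ (s + 1) = x ^ (s - 1) * x ^ 2 := by
  rw [← rpow_natCast, ← rpow_add hx]
  congr 1
  ring

lemma rpow_sub_one_mul_le_two_mul_rpow_add_one {s l x : ℝ} (hs : 1 ≤ s) (hl : 0 < l)
    (hx : 0 ≤ x) : l ^ (s - 1) * ((s + 1) * x ^ 2 - (s - 1) * l ^ 2) ≤ 2 * x ^ (s + 1) := by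
  have h := one_add_mul_sq_sub_one_le_rpow_two_mul (r := (s + 1) / 2) (by linarith)
    (div_nonneg hx hl.le)
  rw [show 2 * ((s + 1) / 2) = s + 1 by ring, div_rpow hx hl.le, div_pow,
    le_div_iff₀ (by positivity), rpow_add_one_eq_rpow_sub_one_mul_sq hl] at h
  field_simp at h
  linarith

noncomputable def powGap (s l t : ℝ) : ℝ :=
  t ^ s - (1 - s ^ 2) * l ^ s - (s * (s + 1) / 2) * l ^ (s - 1) * t
    - (s * (s - 1) / 2) * l ^ (s + 1) * t⁻¹

lemma powGap_self (s : ℝ) {l : ℝ} (hl : 0 < l) : powGap s l l = 0 := by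
  have h₁ : l ^ (s - 1) * l = l ^ s := by rw [← rpow_add_one hl.ne', sub_add_cancel]
  have h₂ : l ^ (s + 1) * l⁻¹ = l ^ s := by
    rw [rpow_add_one hl.ne', mul_inv_cancel_right₀ hl.ne']
  simp only [powGap, mul_assoc, h₁, h₂]
  ring

lemma hasDerivAt_powGap (s l : ℝ) {t : ℝ} (ht : 0 < t) :
    HasDerivAt (powGap s l) (s * t ^ (s - 1) - (s * (s + 1) / 2) * l ^ (s - 1)
      + (s * (s - 1) / 2) * l ^ (s + 1) * (t ^ 2)⁻¹) t := by
  have hpow := (hasDerivAt_rpow_const (p := s) (Or.inl ht.ne')).sub_const ((1 - s ^ 2) * l ^ s)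
  have hlin := (hasDerivAt_id t).const_mul ((s * (s + 1) / 2) * l ^ (s - 1))
  have hinv := (hasDerivAt_inv ht.ne').const_mul ((s * (s - 1) / 2) * l ^ (s + 1))
  exact ((hpow.sub hlin).sub hinv).congr_deriv (by ring)

lemma powGap_deriv_nonneg {s l t : ℝ} (hs : 1 ≤ s) (hl : 0 < l) (ht : 0 < t) :
    0 ≤ s * t ^ (s - 1) - (s * (s + 1) / 2) * l ^ (s - 1)
      + (s * (s - 1) / 2) * l ^ (s + 1) * (t ^ 2)⁻¹ := by
  have key := rpow_sub_one_mul_le_two_mul_rpow_add_one hs hl ht.le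
  rw [rpow_add_one_eq_rpow_sub_one_mul_sq ht] at key
  have h : 0 ≤ s / 2 * (2 * (t ^ (s - 1) * t ^ 2)
      - l ^ (s - 1) * ((s + 1) * t ^ 2 - (s - 1) * l ^ 2)) / t ^ 2 :=
    div_nonneg (mul_nonneg (by linarith) (by linarith)) (by positivity)
  convert h using 1
  rw [rpow_add_one_eq_rpow_sub_one_mul_sq hl]
  field_simp
  ring

lemma monotoneOn_powGap {s l : ℝ} (hs : 1 ≤ s) (hl : 0 < l) :
    MonotoneOn (powGap s l) (Ici l) := by
  have hpos : ∀ t ∈ Ici l, 0 < t := fun t ht => hl.trans_le ht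
  exact monotoneOn_of_hasDerivWithinAt_nonneg (convex_Ici l)
    (fun t ht => (hasDerivAt_powGap s l (hpos t ht)).continuousAt.continuousWithinAt)
    (fun t ht => (hasDerivAt_powGap s l (hpos t (interior_subset ht))).hasDerivWithinAt)
    (fun t ht => powGap_deriv_nonneg hs hl (hpos t (interior_subset ht)))

/-- For `s > 1` and `l ≥ 3`, the function
`g(t) = t^s − (1−s²)l^s − ½s(s+1)l^{s−1}t − ½s(s−1)l^{s+1}t⁻¹` is nonnegative on `[l,∞)`;
in particular `t^s ≥ (1−s²)l^s + ½s(s+1)l^{s−1}t + ½s(s−1)l^{s+1}t⁻¹` for all `t ≥ l`. -/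
theorem stmt_11 (s l : ℝ) (hs : 1 < s) (hl : 3 ≤ l) :
    ∀ t : ℝ, l ≤ t →
      0 ≤ t ^ s - (1 - s ^ 2) * l ^ s - (s * (s + 1) / 2) * l ^ (s - 1) * t
            - (s * (s - 1) / 2) * l ^ (s + 1) * t⁻¹ ∧
      (1 - s ^ 2) * l ^ s + (s * (s + 1) / 2) * l ^ (s - 1) * t
            + (s * (s - 1) / 2) * l ^ (s + 1) * t⁻¹ ≤ t ^ s := by
  intro t ht
  have hl₀ : 0 < l := by linarith
  have hgap : 0 ≤ powGap s l t :=
    powGap_self s hl₀ ▸ monotoneOn_powGap hs.le hl₀ self_mem_Ici ht ht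
  exact ⟨hgap, by unfold powGap at hgap; linarith⟩
end

section
/- Let N ≥ 2 be a natural number and β ≥ 2 a real number. Then there exists a measurable function w: ℝ^N → ℝ with w(x) ≥ 1 for all x and w ∈ L^β_loc(ℝ^N) (that is, ∫_K w^β dx < ∞ for every compact K ⊂ ℝ^N), such that the measure μ defined by μ(E) = ∫_E w dx is not doubling: there is no constant C > 0 with μ(B(x,2ρ)) ≤ C·μ(B(x,ρ)) for all x ∈ ℝ^N and ρ > 0. Equivalently, there are sequences of centers x_k ∈ ℝ^N and radii ρ_k > 0 with μ(B(x_k,2ρ_k))/μ(B(x_k,ρ_k)) → ∞ as k → ∞. -/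
open MeasureTheory Filter Metric

/-!
Put on the balls `B(2k e, 1/8)` (`e` a unit vector) the weight `1 + ‖x‖`, which is `≥ k` there,
and let `w = 1` elsewhere; `w` is locally bounded, hence in every `L^β_loc`. The ball
`B((2k + 1/2) e, 3/8)` misses all these spikes, so its `w`-measure is its volume, a constant,
while its double contains the whole `k`-th spike, of `w`-measure at least `k · |B(0, 1/8)|`.
-/

theorem not_exists_doubling_const_of_tendsto {X : Type*} [PseudoMetricSpace X]
    [MeasurableSpace X] {ν : Measure X} {x : ℕ → X} {ρ : ℕ → ℝ}
    (hρ : ∀ k, 0 < ρ k)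
    (h : Tendsto (fun k => ν (ball (x k) (2 * ρ k)) / ν (ball (x k) (ρ k))) atTop (nhds ⊤)) :
    ¬ ∃ C : ℝ, 0 < C ∧ ∀ (y : X) (r : ℝ), 0 < r →
      ν (ball y (2 * r)) ≤ ENNReal.ofReal C * ν (ball y r) := by
  rintro ⟨C, -, hC⟩
  obtain ⟨k, hk⟩ := (h.eventually (lt_mem_nhds (ENNReal.ofReal_lt_top (r := C)))).exists
  exact hk.not_ge (ENNReal.div_le_of_le_mul (hC _ _ (hρ k)))

noncomputable section SpikeWeight

variable {E : Type*} [NormedAddCommGroup E] [NormedSpace ℝ E] (e : E)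

def spikeCenter (k : ℕ) : E := (2 * k : ℝ) • e

def gapCenter (k : ℕ) : E := (2 * k + 1 / 2 : ℝ) • e

def spikes : Set E := ⋃ k : ℕ, ball (spikeCenter e k) (1 / 8)

def spikeWeight (x : E) : ℝ := (spikes e).indicator norm x + 1

theorem one_le_spikeWeight (x : E) : 1 ≤ spikeWeight e x := by
  unfold spikeWeight
  linarith [Set.indicator_nonneg (fun y _ => norm_nonneg y) x (s := spikes e)]

theorem spikeWeight_le (x : E) : spikeWeight e x ≤ ‖x‖ + 1 := by
  unfold spikeWeight
  linarith [Set.indicator_le_self' (fun y _ => norm_nonneg y) x (s := spikes e)]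

theorem measurable_spikeWeight [MeasurableSpace E] [OpensMeasurableSpace E] :
    Measurable (spikeWeight e) :=
  (measurable_norm.indicator
    (isOpen_iUnion fun _ => isOpen_ball).measurableSet).add_const 1

theorem integrableOn_spikeWeight_rpow [MeasurableSpace E] [OpensMeasurableSpace E]
    (μ : Measure E) [IsFiniteMeasureOnCompacts μ] {β : ℝ} (hβ : 0 ≤ β) {K : Set E}
    (hK : IsCompact K) : IntegrableOn (fun x => spikeWeight e x ^ β) K μ := by
  obtain ⟨R, hKR⟩ := hK.isBounded.subset_closedBall 0
  refine IntegrableOn.of_bound hK.measure_lt_top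
    ((measurable_spikeWeight e).pow_const β).aestronglyMeasurable ((R + 1) ^ β)
    ((ae_restrict_iff' hK.measurableSet).mpr (ae_of_all _ fun x hx => ?_))
  have hw0 : 0 ≤ spikeWeight e x := zero_le_one.trans (one_le_spikeWeight e x)
  have hxR : ‖x‖ ≤ R := mem_closedBall_zero_iff.mp (hKR hx)
  rw [Real.norm_eq_abs, abs_of_nonneg (Real.rpow_nonneg hw0 β)]
  exact Real.rpow_le_rpow hw0 ((spikeWeight_le e x).trans (by linarith)) hβ

variable {e}

theorem dist_smul_smul_of_norm_eq_one (he : ‖e‖ = 1) (a b : ℝ) : dist (a • e) (b • e) = |a - b| := by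
  rw [dist_eq_norm, ← sub_smul, norm_smul, he, mul_one, Real.norm_eq_abs]

theorem natCast_le_spikeWeight (he : ‖e‖ = 1) {k : ℕ} {x : E}
    (hx : x ∈ ball (spikeCenter e k) (1 / 8)) : (k : ℝ) ≤ spikeWeight e x := by
  have hxS : x ∈ spikes e := Set.mem_iUnion.mpr ⟨k, hx⟩
  have hc : ‖spikeCenter e k‖ = 2 * k := by
    rw [spikeCenter, norm_smul, he, mul_one, Real.norm_eq_abs, abs_of_nonneg (by positivity)]
  have hnorm : 2 * (k : ℝ) - ‖x‖ < 1 / 8 :=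
    calc 2 * (k : ℝ) - ‖x‖ = ‖spikeCenter e k‖ - ‖x‖ := by rw [hc]
      _ ≤ dist x (spikeCenter e k) := by rw [dist_comm, dist_eq_norm]; exact norm_sub_norm_le _ _
      _ < 1 / 8 := hx
  rw [spikeWeight, Set.indicator_of_mem hxS]
  linarith [(Nat.cast_nonneg k : (0 : ℝ) ≤ k)]

theorem disjoint_ball_gapCenter_spikes (he : ‖e‖ = 1) (k : ℕ) :
    Disjoint (ball (gapCenter e k) (3 / 8)) (spikes e) := by
  refine Set.disjoint_iUnion_right.mpr fun j => ball_disjoint_ball ?_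
  rw [gapCenter, spikeCenter, dist_smul_smul_of_norm_eq_one he]
  rcases le_or_gt (j : ℝ) k with hjk | hkj
  · rw [abs_of_pos (by linarith)]; linarith
  · have : (k : ℝ) + 1 ≤ j := by exact_mod_cast (Nat.cast_lt.mp hkj)
    rw [abs_of_neg (by linarith)]; linarith

theorem spikeWeight_eq_one (he : ‖e‖ = 1) {k : ℕ} {x : E}
    (hx : x ∈ ball (gapCenter e k) (3 / 8)) : spikeWeight e x = 1 := by
  rw [spikeWeight, Set.indicator_of_notMem
    ((disjoint_ball_gapCenter_spikes he k).notMem_of_mem_left hx), zero_add]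

theorem ball_spikeCenter_subset (he : ‖e‖ = 1) (k : ℕ) :
    ball (spikeCenter e k) (1 / 8) ⊆ ball (gapCenter e k) (2 * (3 / 8)) :=
  ball_subset_ball' (by rw [spikeCenter, gapCenter, dist_smul_smul_of_norm_eq_one he]; norm_num)

section Measure

variable [MeasurableSpace E] [BorelSpace E] (μ : Measure E) [μ.IsAddHaarMeasure]

theorem withDensity_spikeWeight_ball_gapCenter (he : ‖e‖ = 1) (k : ℕ) :
    μ.withDensity (fun x => ENNReal.ofReal (spikeWeight e x)) (ball (gapCenter e k) (3 / 8)) =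
      μ (ball 0 (3 / 8)) := by
  rw [withDensity_apply _ measurableSet_ball,
    setLIntegral_congr_fun measurableSet_ball (g := fun _ => 1)
      fun x hx => by rw [spikeWeight_eq_one he hx, ENNReal.ofReal_one],
    setLIntegral_one, Measure.addHaar_ball_center]

theorem natCast_mul_le_withDensity_spikeWeight_ball_gapCenter (he : ‖e‖ = 1) (k : ℕ) :
    k * μ (ball 0 (1 / 8)) ≤
      μ.withDensity (fun x => ENNReal.ofReal (spikeWeight e x))
        (ball (gapCenter e k) (2 * (3 / 8))) := by
  rw [withDensity_apply _ measurableSet_ball]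
  calc (k : ENNReal) * μ (ball 0 (1 / 8))
      = ∫⁻ _ in ball (spikeCenter e k) (1 / 8), (k : ENNReal) ∂μ := by
        rw [setLIntegral_const, Measure.addHaar_ball_center μ (spikeCenter e k)]
    _ ≤ ∫⁻ x in ball (spikeCenter e k) (1 / 8), ENNReal.ofReal (spikeWeight e x) ∂μ :=
        setLIntegral_mono (ENNReal.measurable_ofReal.comp (measurable_spikeWeight e))
          fun x hx => by
            rw [← ENNReal.ofReal_natCast]
            exact ENNReal.ofReal_le_ofReal (natCast_le_spikeWeight he hx)
    _ ≤ _ := lintegral_mono_set (ball_spikeCenter_subset he k)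

theorem tendsto_withDensity_spikeWeight_doubling_ratio [FiniteDimensional ℝ E] (he : ‖e‖ = 1) :
    Tendsto (fun k =>
        μ.withDensity (fun x => ENNReal.ofReal (spikeWeight e x))
            (ball (gapCenter e k) (2 * (3 / 8))) /
          μ.withDensity (fun x => ENNReal.ofReal (spikeWeight e x))
            (ball (gapCenter e k) (3 / 8))) atTop (nhds ⊤) := by
  have hpos : μ (ball 0 (1 / 8)) / μ (ball (0 : E) (3 / 8)) ≠ 0 :=
    ENNReal.div_ne_zero.mpr ⟨(measure_ball_pos μ _ (by norm_num)).ne', measure_ball_lt_top.ne⟩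
  have hlim := ENNReal.Tendsto.mul_const ENNReal.tendsto_nat_nhds_top (Or.inl ENNReal.top_ne_zero)
    (b := μ (ball 0 (1 / 8)) / μ (ball (0 : E) (3 / 8)))
  rw [ENNReal.top_mul hpos] at hlim
  refine tendsto_nhds_top_mono hlim (Eventually.of_forall fun k => ?_)
  dsimp only
  rw [withDensity_spikeWeight_ball_gapCenter μ he, ← mul_div_assoc]
  exact ENNReal.div_le_div_right (natCast_mul_le_withDensity_spikeWeight_ball_gapCenter μ he k) _

end Measure

end SpikeWeight

/-- For `N ≥ 2` and `β ≥ 2` there is a measurable weight `w ≥ 1` on `ℝ^N` which is in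
`L^β_loc(ℝ^N)` but whose associated measure `μ(E) = ∫_E w` is not doubling: no constant
`C > 0` satisfies `μ(B(x,2ρ)) ≤ C·μ(B(x,ρ))` for all centers `x` and radii `ρ > 0`;
equivalently, there are centers `x_k` and radii `ρ_k > 0` with
`μ(B(x_k,2ρ_k))/μ(B(x_k,ρ_k)) → ∞`. -/
theorem stmt_19 (N : ℕ) (hN : 2 ≤ N) (β : ℝ) (hβ : 2 ≤ β) :
    ∃ w : EuclideanSpace ℝ (Fin N) → ℝ, Measurable w ∧ (∀ x, 1 ≤ w x) ∧
      (∀ K : Set (EuclideanSpace ℝ (Fin N)), IsCompact K →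
        IntegrableOn (fun x => w x ^ β) K volume) ∧
      (¬ ∃ C : ℝ, 0 < C ∧ ∀ (x : EuclideanSpace ℝ (Fin N)) (ρ : ℝ), 0 < ρ →
        (volume.withDensity fun y => ENNReal.ofReal (w y)) (Metric.ball x (2 * ρ)) ≤
          ENNReal.ofReal C *
            (volume.withDensity fun y => ENNReal.ofReal (w y)) (Metric.ball x ρ)) ∧
      (∃ (x : ℕ → EuclideanSpace ℝ (Fin N)) (ρ : ℕ → ℝ), (∀ k, 0 < ρ k) ∧
        Tendsto
          (fun k =>
            (volume.withDensity fun y => ENNReal.ofReal (w y)) (Metric.ball (x k) (2 * ρ k)) /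
              (volume.withDensity fun y => ENNReal.ofReal (w y)) (Metric.ball (x k) (ρ k)))
          atTop (nhds ⊤)) := by
  have : Nonempty (Fin N) := ⟨⟨0, by omega⟩⟩
  obtain ⟨e, he⟩ := exists_norm_eq (EuclideanSpace ℝ (Fin N)) zero_le_one
  have hρ : ∀ _ : ℕ, (0 : ℝ) < 3 / 8 := fun _ => by norm_num
  have hratio := tendsto_withDensity_spikeWeight_doubling_ratio volume he
  exact ⟨spikeWeight e, measurable_spikeWeight e, one_le_spikeWeight e,
    fun K hK => integrableOn_spikeWeight_rpow e volume (by linarith) hK,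
    not_exists_doubling_const_of_tendsto hρ hratio, gapCenter e, fun _ => 3 / 8, hρ, hratio⟩
end
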